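/- arXiv:math/0512486 — 4 statements merged into one kernel-verified Lean document; each statement's English description precedes it below -/
import Mathlib

section
/- Let p ∈ ℚ[t] be a polynomial of degree at most r and let 0 ≤ d ≤ r. Then (1+t)^d divides p in ℚ[t] if and only if the polynomial T_r(p) = Σ_{k=0}^{r} (coefficient of t^k in p) · t^k (1−t)^{r−k} has degree at most r − d. -/
open Polynomial in
/-- The transform `p ↦ Σ_{k=0}^r p_k t^k (1-t)^{r-k}` (passing from `λ_t` to `γ_t`
for a rank-`r` bundle, i.e. `γ_t = (1-t)^r λ_{t/(1-t)}`). -/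
noncomputable def gammaTransform (r : ℕ) (p : ℚ[X]) : ℚ[X] :=
  ∑ k ∈ Finset.range (r + 1), C (p.coeff k) * X ^ k * (1 - X) ^ (r - k)

namespace GammaAux
open Polynomial

lemma coeff_one_sub_pow (n j : ℕ) : ((1 - X : ℚ[X])^n).coeff j = (-1)^j * n.choose j := by
  have h : (1 - X : ℚ[X]) = (-X) + 1 := by ring
  rw [h, add_pow, finset_sum_coeff]
  have hterm : ∀ k, ((-X : ℚ[X])^k * 1^(n-k) * (n.choose k : ℚ[X])).coeff j
      = (if k = j then ((-1)^j * n.choose j : ℚ) else 0) := by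
    intro k
    have e : ((-X : ℚ[X])^k * 1^(n-k) * (n.choose k : ℚ[X]))
        = C ((-1)^k * (n.choose k : ℚ)) * X ^ k := by
      rw [C_mul, C_pow, C_neg, C_1, C_eq_natCast]; ring
    rw [e, coeff_C_mul, coeff_X_pow]
    split_ifs with h1 h2 h3
    · subst h2; ring
    · exact absurd h1.symm h2
    · exact absurd h3.symm h1
    · ring
  rw [Finset.sum_congr rfl fun k _ => hterm k, Finset.sum_ite_eq' (Finset.range (n+1)) j]
  split_ifs with hmem
  · rfl
  · rw [Nat.choose_eq_zero_of_lt (by simpa using hmem)]; simp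

lemma degree_one_sub_X : (1 - X : ℚ[X]).degree = 1 := by
  have : (1 - X : ℚ[X]) = -(X - C 1) := by simp [neg_sub]
  rw [this, degree_neg, degree_X_sub_C]

lemma degree_one_add_pow (d : ℕ) : ((1 + X : ℚ[X])^d).degree = (d : WithBot ℕ) := by
  rw [show (1+X:ℚ[X]) = X + C 1 by rw [C_1, add_comm], degree_pow, degree_X_add_C]
  simp

lemma gT_degree_le (r : ℕ) (p : ℚ[X]) : (gammaTransform r p).degree ≤ (r : ℕ) := by
  refine (degree_sum_le _ _).trans (Finset.sup_le fun k hk => ?_)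
  have hk' : k ≤ r := Nat.lt_succ_iff.mp (Finset.mem_range.mp hk)
  calc (C (p.coeff k) * X ^ k * (1 - X) ^ (r - k)).degree
      ≤ (C (p.coeff k) * X ^ k).degree + ((1 - X : ℚ[X]) ^ (r-k)).degree :=
        degree_mul_le _ _
    _ ≤ (k : WithBot ℕ) + ((r - k : ℕ) : WithBot ℕ) := by
        refine add_le_add (degree_C_mul_X_pow_le _ _) ?_
        rw [degree_pow, degree_one_sub_X]
        simp
    _ = ((r : ℕ) : WithBot ℕ) := by
        rw [← Nat.cast_add, Nat.add_sub_cancel' hk']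

lemma gT_shift (r : ℕ) (q : ℚ[X]) (hq : q.degree ≤ (r:ℕ)) :
    gammaTransform (r+1) ((1+X) * q) = gammaTransform r q := by
  have hq1 : q.coeff (r+1) = 0 :=
    coeff_eq_zero_of_degree_lt (lt_of_le_of_lt hq (by exact_mod_cast Nat.lt_succ_self r))
  have e : (1+X:ℚ[X]) * q = q + X * q := by ring
  rw [e]
  unfold gammaTransform
  simp only [coeff_add, C_add, add_mul, Finset.sum_add_distrib]
  have hA : ∑ x ∈ Finset.range (r+1+1), C (q.coeff x) * X ^ x * (1 - X) ^ (r+1 - x)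
      = ∑ x ∈ Finset.range (r+1), C (q.coeff x) * X ^ x * (1 - X) ^ (r+1 - x) := by
    rw [Finset.sum_range_succ, hq1]; simp
  have hB : ∑ x ∈ Finset.range (r+1+1), C ((X*q).coeff x) * X ^ x * (1 - X) ^ (r+1 - x)
      = ∑ x ∈ Finset.range (r+1), C ((X*q).coeff (x+1)) * X ^ (x+1) * (1 - X) ^ (r+1 - (x+1)) := by
    rw [Finset.sum_range_succ']
    simp [mul_coeff_zero, coeff_X_zero]
  rw [hA, hB, ← Finset.sum_add_distrib]
  refine Finset.sum_congr rfl fun k hk => ?_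
  have hk' : k ≤ r := Nat.lt_succ_iff.mp (Finset.mem_range.mp hk)
  have e1 : r + 1 - k = (r - k) + 1 := by omega
  have e2 : r + 1 - (k + 1) = r - k := by omega
  rw [e1, e2, coeff_X_mul]
  ring

lemma key_sum (m k : ℕ) :
    ∑ i ∈ Finset.range (m+1), C ((-1:ℚ)^i * (m.choose i : ℚ)) * X^(k+i) * (1+X)^(m-i)
      = X^k := by
  have h1 : ((-X) + (1+X) : ℚ[X]) = 1 := by ring
  have h2 := add_pow (-X : ℚ[X]) (1+X) m
  rw [h1, one_pow] at h2
  calc ∑ i ∈ Finset.range (m+1), C ((-1:ℚ)^i * (m.choose i : ℚ)) * X^(k+i) * (1+X)^(m-i)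
      = X^k * ∑ i ∈ Finset.range (m+1), (-X:ℚ[X])^i * (1+X)^(m-i) * (m.choose i : ℚ[X]) := by
        rw [Finset.mul_sum]
        refine Finset.sum_congr rfl fun i _ => ?_
        rw [C_mul, C_pow, C_neg, C_1, C_eq_natCast, pow_add]; ring
    _ = X^k := by rw [← h2, mul_one]

lemma inv_basis (r k : ℕ) (hk : k ≤ r) :
    ∑ j ∈ Finset.range (r+1), C ((X^k * (1-X)^(r-k) : ℚ[X]).coeff j) * X^j * (1+X)^(r-j)
      = X^k := by
  have hcoeff : ∀ j, (X^k * (1-X)^(r-k) : ℚ[X]).coeff j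
      = if k ≤ j then (-1:ℚ)^(j-k) * ((r-k).choose (j-k) : ℚ) else 0 := by
    intro j
    rw [mul_comm, coeff_mul_X_pow']
    split_ifs with h
    · exact coeff_one_sub_pow _ _
    · rfl
  simp only [hcoeff]
  have hsub : Finset.Ico k (r+1) ⊆ Finset.range (r+1) := by
    intro j hj; simp only [Finset.mem_Ico] at hj; exact Finset.mem_range.mpr hj.2
  rw [← Finset.sum_subset hsub ?h0]
  case h0 =>
    intro j hj hj2
    simp only [Finset.mem_range] at hj
    simp only [Finset.mem_Ico, not_and, not_lt] at hj2
    have hnk : ¬ k ≤ j := fun h => absurd hj (not_lt.mpr (hj2 h))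
    simp [hnk]
  rw [Finset.sum_Ico_eq_sum_range]
  have hm : r + 1 - k = (r - k) + 1 := by omega
  rw [hm]
  rw [← key_sum (r - k) k]
  refine Finset.sum_congr rfl fun i hi => ?_
  have hi' : i ≤ r - k := Nat.lt_succ_iff.mp (Finset.mem_range.mp hi)
  have e1 : k ≤ k + i := Nat.le_add_right _ _
  have e2 : k + i - k = i := by omega
  have e3 : r - (k + i) = r - k - i := by omega
  simp only [if_pos e1, e2, e3]

lemma gT_inv (r : ℕ) (p : ℚ[X]) (hp : p.degree ≤ (r:ℕ)) :
    ∑ j ∈ Finset.range (r+1), C ((gammaTransform r p).coeff j) * X^j * (1+X)^(r-j) = p := by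
  have hcoeff : ∀ j, (gammaTransform r p).coeff j
      = ∑ k ∈ Finset.range (r+1), p.coeff k * (X^k * (1-X)^(r-k) : ℚ[X]).coeff j := by
    intro j
    unfold gammaTransform
    rw [finset_sum_coeff]
    exact Finset.sum_congr rfl fun k _ => by rw [mul_assoc, coeff_C_mul]
  calc ∑ j ∈ Finset.range (r+1), C ((gammaTransform r p).coeff j) * X^j * (1+X)^(r-j)
      = ∑ j ∈ Finset.range (r+1), ∑ k ∈ Finset.range (r+1),
          C (p.coeff k) * (C ((X^k * (1-X)^(r-k) : ℚ[X]).coeff j) * X^j * (1+X)^(r-j)) := by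
        refine Finset.sum_congr rfl fun j _ => ?_
        rw [hcoeff j, map_sum, Finset.sum_mul, Finset.sum_mul]
        refine Finset.sum_congr rfl fun k _ => ?_
        rw [C_mul]; ring
    _ = ∑ k ∈ Finset.range (r+1), ∑ j ∈ Finset.range (r+1),
          C (p.coeff k) * (C ((X^k * (1-X)^(r-k) : ℚ[X]).coeff j) * X^j * (1+X)^(r-j)) :=
        Finset.sum_comm
    _ = ∑ k ∈ Finset.range (r+1), C (p.coeff k) * X^k := by
        refine Finset.sum_congr rfl fun k hk => ?_
        rw [← Finset.mul_sum, inv_basis r k (Nat.lt_succ_iff.mp (Finset.mem_range.mp hk))]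
    _ = p := by
        have hnd : p.natDegree < r + 1 := Nat.lt_succ_of_le (natDegree_le_iff_degree_le.mpr hp)
        conv_rhs => rw [p.as_sum_range' (r+1) hnd]
        exact Finset.sum_congr rfl fun k _ => C_mul_X_pow_eq_monomial

lemma gT_pow_mul (d : ℕ) : ∀ (n : ℕ) (h : ℚ[X]), h.degree ≤ (n:ℕ) →
    gammaTransform (n+d) ((1+X)^d * h) = gammaTransform n h := by
  induction d with
  | zero => intro n h _; simp
  | succ d ih =>
    intro n h hh
    have hdeg : ((1+X:ℚ[X])^d * h).degree ≤ ((n+d : ℕ) : WithBot ℕ) := by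
      refine (degree_mul_le _ _).trans ?_
      calc ((1+X:ℚ[X])^d).degree + h.degree ≤ (d : WithBot ℕ) + ((n:ℕ) : WithBot ℕ) :=
            add_le_add (le_of_eq (degree_one_add_pow d)) hh
        _ = ((n+d : ℕ) : WithBot ℕ) := by rw [← Nat.cast_add]; norm_cast; omega
    have e : (1+X:ℚ[X])^(d+1) * h = (1+X) * ((1+X)^d * h) := by ring
    rw [show n + (d+1) = (n+d)+1 from rfl, e, gT_shift (n+d) _ hdeg, ih n h hh]

end GammaAux

open Polynomial in
/-- For `p ∈ ℚ[t]` of degree at most `r` and `0 ≤ d ≤ r`, `(1+t)^d` divides `p`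
if and only if `T_r(p) = Σ_{k=0}^r p_k t^k (1-t)^{r-k}` has degree at most `r - d`. -/
theorem pow_one_add_dvd_iff_gammaTransform_degree_le (r d : ℕ) (hd : d ≤ r)
    (p : ℚ[X]) (hp : p.degree ≤ (r : ℕ)) :
    (1 + X) ^ d ∣ p ↔ (gammaTransform r p).degree ≤ ((r - d : ℕ) : WithBot ℕ) := by
  constructor
  · rintro ⟨h, rfl⟩
    by_cases hz : h = 0
    · subst hz
      simp only [mul_zero]
      have h0 : gammaTransform r (0 : ℚ[X]) = 0 := by simp [gammaTransform]
      rw [h0, degree_zero]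
      exact bot_le
    · have hdh : h.degree ≤ ((r - d : ℕ) : WithBot ℕ) := by
        rw [degree_mul, GammaAux.degree_one_add_pow, degree_eq_natDegree hz,
          ← Nat.cast_add] at hp
        have hp' : d + h.natDegree ≤ r := by exact_mod_cast hp
        rw [degree_eq_natDegree hz]
        exact_mod_cast (by omega : h.natDegree ≤ r - d)
      have heq : gammaTransform r ((1+X)^d * h) = gammaTransform (r-d) h := by
        have h2 := GammaAux.gT_pow_mul d (r-d) h hdh
        rwa [Nat.sub_add_cancel hd] at h2
      rw [heq]
      exact GammaAux.gT_degree_le (r-d) h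
  · intro hdeg
    rw [← GammaAux.gT_inv r p hp]
    refine Finset.dvd_sum fun j hj => ?_
    by_cases hc : (gammaTransform r p).coeff j = 0
    · simp [hc]
    · have hj' : (j : WithBot ℕ) ≤ ((r - d : ℕ) : WithBot ℕ) :=
        le_trans (le_degree_of_ne_zero hc) hdeg
      have hjle : j ≤ r - d := by exact_mod_cast hj'
      have hdle : d ≤ r - j := by omega
      exact (pow_dvd_pow _ hdle).trans (dvd_mul_left _ _)
end

section
/- Let V be a finite-dimensional real vector space, b a positive-definite symmetric bilinear form on V, c > 0 and h > c real numbers, and α₁,…,α_m linear functionals on V satisfying Σ_{j=1}^m α_j(ξ)² = 2c·b(ξ,ξ) for all ξ ∈ V. Let z₁,…,z_m be complex numbers with |z_j| = 1 and let t ∈ (−1, 0]. Then for every nonzero ξ ∈ V one has (h+c)·b(ξ,ξ) − t·Σ_{j=1}^m Re(z_j/(1 + t·z_j))·α_j(ξ)² ≥ (h−c)·b(ξ,ξ) > 0; in particular this quadratic form is positive definite. -/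
/-!
Since `t z / (1 + t z) = 1 - (1 + t z)⁻¹` and `Re (1 + t z) > 0` for `|t| < 1`, `|z| ≤ 1`, each
weight `t · Re (z / (1 + t z))` is at most `1`. Hence the perturbation
`t · Σ_j Re (z_j / (1 + t z_j)) α_j(ξ)²` is at most `Σ_j α_j(ξ)² = 2c · b(ξ, ξ)`, leaving at least `(h - c) · b(ξ, ξ)`.
-/

namespace Complex

theorem re_div_one_add_le_one {v : ℂ} (hv : 0 < (1 + v).re) : (v / (1 + v)).re ≤ 1 := by
  have hne : 1 + v ≠ 0 := fun h ↦ by simp [h] at hv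
  have hsplit : v / (1 + v) = 1 - (1 + v)⁻¹ := by field_simp; ring
  have hinv : 0 ≤ ((1 + v)⁻¹).re := by
    rw [inv_re]
    exact div_nonneg hv.le (normSq_nonneg _)
  rw [hsplit, sub_re, one_re]
  linarith

theorem one_add_ofReal_mul_re_pos {t : ℝ} (ht : |t| < 1) {z : ℂ} (hz : ‖z‖ ≤ 1) :
    0 < (1 + t * z).re := by
  have hre : |z.re| ≤ 1 := (abs_re_le_norm z).trans hz
  have hprod : |t * z.re| < 1 := by
    rw [abs_mul]
    calc |t| * |z.re| ≤ |t| * 1 := by gcongr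
      _ < 1 := by rwa [mul_one]
  rw [add_re, one_re, re_ofReal_mul]
  linarith [neg_abs_le (t * z.re)]

theorem ofReal_mul_re_div_one_add_ofReal_mul_le_one {t : ℝ} (ht : |t| < 1) {z : ℂ}
    (hz : ‖z‖ ≤ 1) : t * (z / (1 + t * z)).re ≤ 1 := by
  rw [← re_ofReal_mul, mul_div_assoc']
  exact re_div_one_add_le_one (one_add_ofReal_mul_re_pos ht hz)

end Complex

theorem hessian_positive_definite_general {V : Type*} [AddCommGroup V] [Module ℝ V]
    (b : LinearMap.BilinForm ℝ V)
    (hbpos : ∀ ξ : V, ξ ≠ 0 → 0 < b ξ ξ)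
    (c h : ℝ) (hh : c < h)
    (m : ℕ) (α : Fin m → (V →ₗ[ℝ] ℝ))
    (hα : ∀ ξ : V, ∑ j, (α j ξ) ^ 2 = 2 * c * b ξ ξ)
    (z : Fin m → ℂ) (hz : ∀ j, ‖z j‖ = 1)
    (t : ℝ) (ht1 : -1 < t) (ht0 : t ≤ 0)
    (ξ : V) (hξ : ξ ≠ 0) :
    (h - c) * b ξ ξ ≤
        (h + c) * b ξ ξ - t * ∑ j, (z j / (1 + (t : ℂ) * z j)).re * (α j ξ) ^ 2 ∧
      0 < (h - c) * b ξ ξ := by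
  have ht : |t| < 1 := abs_lt.mpr ⟨ht1, by linarith⟩
  have hperturb : t * ∑ j, (z j / (1 + (t : ℂ) * z j)).re * (α j ξ) ^ 2 ≤ 2 * c * b ξ ξ := by
    rw [Finset.mul_sum, ← hα ξ]
    gcongr with j
    rw [← mul_assoc]
    exact mul_le_of_le_one_left (sq_nonneg _)
      (Complex.ofReal_mul_re_div_one_add_ofReal_mul_le_one ht (hz j).le)
  have hpos : 0 < (h - c) * b ξ ξ := mul_pos (sub_pos.mpr hh) (hbpos ξ hξ)
  exact ⟨by linarith, hpos⟩

/-- Lemma "hessian": if `b` is a positive-definite symmetric bilinear form on a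
finite-dimensional real vector space, `0 < c < h`, the linear functionals `α j` satisfy
`Σ_j α_j(ξ)² = 2c·b(ξ,ξ)`, the `z j` are unit complex numbers and `t ∈ (-1, 0]`, then for
every nonzero `ξ` the quadratic form
`(h+c)·b(ξ,ξ) - t·Σ_j Re(z_j/(1+t z_j))·α_j(ξ)²` is bounded below by `(h-c)·b(ξ,ξ) > 0`;
in particular it is positive definite. -/
theorem hessian_positive_definite {V : Type*} [AddCommGroup V] [Module ℝ V]
    [FiniteDimensional ℝ V]
    (b : LinearMap.BilinForm ℝ V) (hbsymm : ∀ x y, b x y = b y x)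
    (hbpos : ∀ ξ : V, ξ ≠ 0 → 0 < b ξ ξ)
    (c h : ℝ) (hc : 0 < c) (hh : c < h)
    (m : ℕ) (α : Fin m → (V →ₗ[ℝ] ℝ))
    (hα : ∀ ξ : V, ∑ j, (α j ξ) ^ 2 = 2 * c * b ξ ξ)
    (z : Fin m → ℂ) (hz : ∀ j, ‖z j‖ = 1)
    (t : ℝ) (ht1 : -1 < t) (ht0 : t ≤ 0)
    (ξ : V) (hξ : ξ ≠ 0) :
    (h - c) * b ξ ξ ≤
        (h + c) * b ξ ξ - t * ∑ j, (z j / (1 + (t : ℂ) * z j)).re * (α j ξ) ^ 2 ∧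
      0 < (h - c) * b ξ ξ :=
  hessian_positive_definite_general b hbpos c h hh m α hα z hz t ht1 ht0 ξ hξ
end

section
/- Let a be a nonzero real number and θ : ℝ → ℝ a function with θ(x)/x → a as x → 0⁺. Set z(x) = exp(i·θ(x)) and t(x) = x² − 1. Then as x → 0⁺, the sum z(x)/(1 + t(x)·z(x)) + z(x)⁻¹/(1 + t(x)·z(x)⁻¹) converges to −1 + 2/a². -/
/-!
With `z = exp(iθ)` and `c = cos θ`, putting the two fractions over their common denominator
`(1 + tz)(1 + tz⁻¹) = 1 + 2tc + t²` turns the sum into the real number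
`2(c + t)/(1 + 2tc + t²)`. For `t = x² - 1` both numerator and denominator are divisible by `x²`:
with `q = (1 - c)/x²` the sum is `2(1 - q)/(x² + 2(1 - x²)q)`. Since
`1 - cos θ = (θ²/2) sinc(θ/2)²` and `θ/x → a`, `θ → 0`, we get `q → a²/2`,
and the sum tends to `(2 - a²)/a² = -1 + 2/a²`.
-/

open Filter Topology

theorem Real.one_sub_cos_eq_mul_sinc_sq (u : ℝ) :
    1 - Real.cos u = u ^ 2 / 2 * Real.sinc (u / 2) ^ 2 := by
  rcases eq_or_ne u 0 with rfl | hu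
  · simp
  have h := Real.cos_sq (u / 2)
  rw [mul_div_cancel₀ u two_ne_zero] at h
  rw [Real.sinc_of_ne_zero (div_ne_zero hu two_ne_zero), div_pow, Real.sin_sq]
  field_simp
  linarith

theorem tendsto_one_sub_cos_div_sq {α : Type*} {l : Filter α} {f g : α → ℝ} {a : ℝ}
    (hfg : Tendsto (fun x => f x / g x) l (𝓝 a)) (hg : Tendsto g l (𝓝 0))
    (hg0 : ∀ᶠ x in l, g x ≠ 0) :
    Tendsto (fun x => (1 - Real.cos (f x)) / g x ^ 2) l (𝓝 (a ^ 2 / 2)) := by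
  have hf : Tendsto f l (𝓝 0) := by
    simpa using (hfg.mul hg).congr' (hg0.mono fun x hx => div_mul_cancel₀ (f x) hx)
  have hsinc : Tendsto (fun x => Real.sinc (f x / 2)) l (𝓝 1) :=
    (Real.continuous_sinc.tendsto' 0 1 Real.sinc_zero).comp (by simpa using hf.div_const 2)
  have := (hfg.pow 2).div_const 2 |>.mul (hsinc.pow 2)
  rw [one_pow, mul_one] at this
  refine this.congr' (hg0.mono fun x hx => ?_)
  simp only [Real.one_sub_cos_eq_mul_sinc_sq]
  field_simp

theorem div_one_add_mul_add_inv_div_one_add_mul_inv {K : Type*} [Field K] {z t : K} (hz : z ≠ 0)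
    (h : 1 + t * (z + z⁻¹) + t ^ 2 ≠ 0) :
    z / (1 + t * z) + z⁻¹ / (1 + t * z⁻¹) =
      (z + z⁻¹ + 2 * t) / (1 + t * (z + z⁻¹) + t ^ 2) := by
  have hprod : (1 + t * z) * (1 + t * z⁻¹) = 1 + t * (z + z⁻¹) + t ^ 2 := by
    field_simp; ring
  rw [← hprod] at h ⊢
  rw [div_add_div _ _ (left_ne_zero_of_mul h) (right_ne_zero_of_mul h)]
  congr 1
  field_simp
  ring

theorem exp_I_mul_div_add_inv_div_eq_ofReal {θ t : ℝ} (ht : |t| < 1) :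
    Complex.exp (Complex.I * θ) / (1 + t * Complex.exp (Complex.I * θ)) +
        (Complex.exp (Complex.I * θ))⁻¹ / (1 + t * (Complex.exp (Complex.I * θ))⁻¹) =
      ((2 * (Real.cos θ + t) / (1 + 2 * t * Real.cos θ + t ^ 2) : ℝ) : ℂ) := by
  have hz :
      Complex.exp (Complex.I * θ) + (Complex.exp (Complex.I * θ))⁻¹ = 2 * Real.cos θ := by
    rw [← Complex.exp_neg, Complex.ofReal_cos, Complex.cos]
    ring_nf
  have hpos : 0 < 1 + 2 * t * Real.cos θ + t ^ 2 := by
    have hcos : |t * Real.cos θ| ≤ |t| := by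
      rw [abs_mul]; exact mul_le_of_le_one_right (abs_nonneg t) (Real.abs_cos_le_one θ)
    nlinarith [neg_abs_le (t * Real.cos θ), sq_abs t, mul_pos (sub_pos.2 ht) (sub_pos.2 ht)]
  have hden : (1 : ℂ) + t * (Complex.exp (Complex.I * θ) + (Complex.exp (Complex.I * θ))⁻¹) +
      t ^ 2 ≠ 0 := by
    rw [hz]; exact_mod_cast (by linarith : 1 + t * (2 * Real.cos θ) + t ^ 2 ≠ 0)
  rw [div_one_add_mul_add_inv_div_one_add_mul_inv (Complex.exp_ne_zero _) hden, hz]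
  push_cast
  ring

/-- Second identity of equation "(limits)": with `z(x) = exp(i θ(x))`, `θ(x) ~ a·x`
(`a ≠ 0` real) and `t(x) = x² - 1`, one has
`z/(1+tz) + z⁻¹/(1+tz⁻¹) → -1 + 2/a²` as `x → 0⁺`. -/
theorem limit_sum_div_one_add_mul (a : ℝ) (ha : a ≠ 0) (θ : ℝ → ℝ)
    (hθ : Tendsto (fun x => θ x / x) (nhdsWithin 0 (Set.Ioi 0)) (nhds a)) :
    Tendsto
      (fun x : ℝ =>
        Complex.exp (Complex.I * (θ x : ℂ)) /
            (1 + ((x ^ 2 - 1 : ℝ) : ℂ) * Complex.exp (Complex.I * (θ x : ℂ))) +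
          (Complex.exp (Complex.I * (θ x : ℂ)))⁻¹ /
            (1 + ((x ^ 2 - 1 : ℝ) : ℂ) * (Complex.exp (Complex.I * (θ x : ℂ)))⁻¹))
      (nhdsWithin 0 (Set.Ioi 0)) (nhds (-1 + 2 / (a : ℂ) ^ 2)) := by
  set q : ℝ → ℝ := fun x => (1 - Real.cos (θ x)) / x ^ 2 with hq_def
  have hid : Tendsto (fun x : ℝ => x) (𝓝[>] 0) (𝓝 0) :=
    tendsto_nhdsWithin_of_tendsto_nhds tendsto_id
  have hq : Tendsto q (𝓝[>] 0) (𝓝 (a ^ 2 / 2)) :=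
    tendsto_one_sub_cos_div_sq hθ hid (eventually_mem_nhdsWithin.mono fun x hx => hx.ne')
  have hF : Tendsto (fun x => 2 * (1 - q x) / (x ^ 2 + 2 * (1 - x ^ 2) * q x)) (𝓝[>] 0)
      (𝓝 (2 * (1 - a ^ 2 / 2) / (0 ^ 2 + 2 * (1 - 0 ^ 2) * (a ^ 2 / 2)))) :=
    ((hq.const_sub 1).const_mul 2).div
      ((hid.pow 2).add ((((hid.pow 2).const_sub 1).const_mul 2).mul hq)) (by simpa using ha)
  have hlim : ((2 * (1 - a ^ 2 / 2) / (0 ^ 2 + 2 * (1 - 0 ^ 2) * (a ^ 2 / 2)) : ℝ) : ℂ) =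
      -1 + 2 / (a : ℂ) ^ 2 := by
    have ha' : (a : ℂ) ≠ 0 := by exact_mod_cast ha
    push_cast
    field_simp
    ring
  rw [← hlim]
  refine ((Complex.continuous_ofReal.tendsto _).comp hF).congr' ?_
  filter_upwards [Ioo_mem_nhdsGT zero_lt_one] with x ⟨hx0, hx1⟩
  have ht : |x ^ 2 - 1| < 1 := abs_lt.2 ⟨by nlinarith, by nlinarith⟩
  rw [Function.comp_apply, exp_I_mul_div_add_inv_div_eq_ofReal ht, Complex.ofReal_inj,
    ← mul_div_mul_left _ _ (pow_ne_zero 2 hx0.ne')]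
  congr 1 <;> simp only [hq_def] <;> field_simp <;> ring
end

section
/- Let V be a finite-dimensional real vector space, B a positive-definite symmetric bilinear form on V, and β₁,…,β_m nonzero linear functionals on V. Let C be a connected component of the open set {ζ ∈ V : β_j(ζ) ≠ 0 for all j}. Then the function f(ζ) = (1/2)·B(ζ,ζ) − Σ_{j=1}^m log|β_j(ζ)| has compact sublevel sets in C: for every M ∈ ℝ, the set {ζ ∈ C : f(ζ) ≤ M} is compact. In particular, f(ζ_n) → ∞ along any sequence ζ_n ∈ C with ‖ζ_n‖ → ∞ or with ζ_n converging to a point where some β_j vanishes. -/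
open Filter Topology Set

/-!
Since `log y ≤ y` and each `|β_j ζ|` is at most a constant times `‖ζ‖`, the potential is bounded
below by `c‖ζ‖² - A‖ζ‖`, so it tends to `∞` at infinity; near a point where `β_j` vanishes the
other logarithms stay bounded above while `-log |β_j|` tends to `∞`. Hence its sublevel sets in
`U = {ζ | ∀ j, β j ζ ≠ 0}` are compact, and so are their intersections with a connected component
`C` of `U`, because `closure C ∩ U = C`.
-/

section Sublevel

variable {X : Type*} [TopologicalSpace X] {U : Set X} {F : X → ℝ}

theorem isClosed_sublevel_of_tendsto_atTop (hU : IsOpen U) (hF : ContinuousOn F U)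
    (h_wall : ∀ p ∉ U, Tendsto F (𝓝[U] p) atTop) (M : ℝ) :
    IsClosed {x ∈ U | F x ≤ M} := by
  refine closure_subset_iff_isClosed.1 fun p hp => ?_
  have := mem_closure_iff_nhdsWithin_neBot.1 hp
  have h_le : ∀ᶠ x in 𝓝[{x ∈ U | F x ≤ M}] p, F x ≤ M :=
    eventually_nhdsWithin_of_forall fun x hx => hx.2
  by_cases hpU : p ∈ U
  · have hFp : Tendsto F (𝓝[{x ∈ U | F x ≤ M}] p) (𝓝 (F p)) :=
      (hF.continuousAt (hU.mem_nhds hpU)).tendsto.mono_left nhdsWithin_le_nhds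
    exact ⟨hpU, le_of_tendsto hFp h_le⟩
  · have h_gt : ∀ᶠ x in 𝓝[{x ∈ U | F x ≤ M}] p, M < F x :=
      ((h_wall p hpU).mono_left (nhdsWithin_mono _ (sep_subset _ _))).eventually_gt_atTop M
    obtain ⟨x, hgt, hle⟩ := (h_gt.and h_le).exists
    exact absurd hle (not_le.2 hgt)

theorem isCompact_sublevel_of_tendsto_atTop (hU : IsOpen U) (hF : ContinuousOn F U)
    (h_infty : Tendsto F (cocompact X ⊓ 𝓟 U) atTop)
    (h_wall : ∀ p ∉ U, Tendsto F (𝓝[U] p) atTop) (M : ℝ) :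
    IsCompact {x ∈ U | F x ≤ M} := by
  obtain ⟨L, hL, hLc⟩ :=
    mem_cocompact.1 (mem_inf_principal.1 (h_infty.eventually_gt_atTop M))
  refine hL.of_isClosed_subset (isClosed_sublevel_of_tendsto_atTop hU hF h_wall M) ?_
  intro x hx
  by_contra hxL
  exact not_lt.2 hx.2 (hLc hxL hx.1)

theorem closure_connectedComponentIn_inter_subset (x : X) :
    closure (connectedComponentIn U x) ∩ U ⊆ connectedComponentIn U x := by
  by_cases hx : x ∈ U
  · have h_pre : IsPreconnected (closure (connectedComponentIn U x) ∩ U) :=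
      isPreconnected_connectedComponentIn.subset_closure
        (subset_inter subset_closure (connectedComponentIn_subset U x)) inter_subset_left
    exact h_pre.subset_connectedComponentIn
      ⟨subset_closure (mem_connectedComponentIn hx), hx⟩ inter_subset_right
  · simp [connectedComponentIn_eq_empty hx]

theorem IsCompact.connectedComponentIn_inter {K : Set X} (hK : IsCompact K) (hKU : K ⊆ U)
    (x : X) : IsCompact (connectedComponentIn U x ∩ K) := by
  have h : connectedComponentIn U x ∩ K = closure (connectedComponentIn U x) ∩ K :=
    subset_antisymm (inter_subset_inter_left _ subset_closure)
      fun y hy => ⟨closure_connectedComponentIn_inter_subset x ⟨hy.1, hKU hy.2⟩, hy.2⟩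
  rw [h]
  exact hK.inter_left isClosed_closure

theorem tendsto_comp_atTop_of_isCompact_sublevel {ι : Type*} {l : Filter ι} {C : Set X}
    {u : ι → X} (hF : ∀ M, IsCompact {x ∈ C | F x ≤ M}) (hu : ∀ᶠ i in l, u i ∈ C)
    (h_leave : ∀ K ⊆ C, IsCompact K → ∀ᶠ i in l, u i ∉ K) : Tendsto (F ∘ u) l atTop := by
  refine tendsto_atTop.2 fun M => ?_
  filter_upwards [hu, h_leave _ (sep_subset _ _) (hF M)] with i hiC hiK
  exact (not_le.1 fun h => hiK ⟨hiC, h⟩).le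

end Sublevel

theorem Finset.sum_log_abs_le_log_abs_add_sum_abs {ι : Type*} (s : Finset ι) (a : ι → ℝ)
    {j : ι} (hj : j ∈ s) :
    ∑ k ∈ s, Real.log |a k| ≤ Real.log |a j| + ∑ k ∈ s, |a k| := by
  classical
  rw [← s.add_sum_erase _ hj]
  gcongr
  calc ∑ k ∈ s.erase j, Real.log |a k| ≤ ∑ k ∈ s.erase j, |a k| :=
        sum_le_sum fun k _ => Real.log_le_self (abs_nonneg _)
    _ ≤ ∑ k ∈ s, |a k| :=
        sum_le_sum_of_subset_of_nonneg (erase_subset j s) fun _ _ _ => abs_nonneg _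

section LogPotential

variable {V : Type*} [NormedAddCommGroup V] [NormedSpace ℝ V] [FiniteDimensional ℝ V]
  {ι : Type*} [Fintype ι]

theorem LinearMap.BilinForm.continuous_apply_self (B : LinearMap.BilinForm ℝ V) :
    Continuous fun x => B x x :=
  B.toContinuousBilinearMap.continuous₂.comp (continuous_id.prodMk continuous_id)

theorem LinearMap.BilinForm.exists_pos_mul_norm_sq_le {B : LinearMap.BilinForm ℝ V}
    (hB : ∀ x, x ≠ 0 → 0 < B x x) : ∃ c > 0, ∀ x, c * ‖x‖ ^ 2 ≤ B x x := by
  obtain ⟨c, hc, hcB⟩ := (isCompact_sphere (0 : V) 1).exists_forall_le'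
    B.continuous_apply_self.continuousOn fun u hu => hB u (ne_zero_of_mem_unit_sphere ⟨u, hu⟩)
  refine ⟨c, hc, fun x => ?_⟩
  rcases eq_or_ne x 0 with rfl | hx
  · simp
  have hx' : 0 < ‖x‖ := norm_pos_iff.2 hx
  have hu : ‖x‖⁻¹ • x ∈ Metric.sphere (0 : V) 1 := by
    simp [norm_smul, hx'.ne']
  have := hcB _ hu
  simp only [map_smul, LinearMap.smul_apply, smul_eq_mul] at this
  calc c * ‖x‖ ^ 2 ≤ ‖x‖⁻¹ * (‖x‖⁻¹ * B x x) * ‖x‖ ^ 2 := by gcongr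
    _ = B x x := by field_simp

theorem exists_sum_abs_le_mul_norm (β : ι → V →ₗ[ℝ] ℝ) :
    ∃ A, ∀ x, ∑ j, |β j x| ≤ A * ‖x‖ := by
  refine ⟨∑ j, ‖LinearMap.toContinuousLinearMap (β j)‖, fun x => ?_⟩
  rw [Finset.sum_mul]
  exact Finset.sum_le_sum fun j _ => (LinearMap.toContinuousLinearMap (β j)).le_opNorm x

noncomputable def logPotential (B : LinearMap.BilinForm ℝ V) (β : ι → V →ₗ[ℝ] ℝ) (ζ : V) : ℝ :=
  (1 / 2) * B ζ ζ - ∑ j, Real.log |β j ζ|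

theorem isOpen_setOf_forall_ne_zero (β : ι → V →ₗ[ℝ] ℝ) : IsOpen {x | ∀ j, β j x ≠ 0} := by
  rw [ofPred_forall]
  exact isOpen_iInter_of_finite fun j =>
    isOpen_ne_fun (β j).continuous_of_finiteDimensional continuous_const

theorem continuousOn_logPotential (B : LinearMap.BilinForm ℝ V) (β : ι → V →ₗ[ℝ] ℝ) :
    ContinuousOn (logPotential B β) {x | ∀ j, β j x ≠ 0} := by
  intro x hx
  refine ContinuousAt.continuousWithinAt ?_
  exact (B.continuous_apply_self.continuousAt.const_mul _).sub <|
    tendsto_finsetSum _ fun j _ =>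
      (β j).continuous_of_finiteDimensional.abs.continuousAt.log (abs_ne_zero.2 (hx j))

theorem tendsto_logPotential_cocompact {B : LinearMap.BilinForm ℝ V}
    (hB : ∀ x, x ≠ 0 → 0 < B x x) (β : ι → V →ₗ[ℝ] ℝ) :
    Tendsto (logPotential B β) (cocompact V) atTop := by
  obtain ⟨c, hc, hcB⟩ := B.exists_pos_mul_norm_sq_le hB
  obtain ⟨A, hA⟩ := exists_sum_abs_le_mul_norm β
  have h_lower : ∀ x, ‖x‖ * (c / 2 * ‖x‖ - A) ≤ logPotential B β x := fun x => by
    have := Finset.sum_le_sum fun j (_ : j ∈ Finset.univ) =>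
      Real.log_le_self (abs_nonneg (β j x))
    unfold logPotential
    nlinarith [hcB x, hA x]
  have h_quad : Tendsto (fun t : ℝ => t * (c / 2 * t - A)) atTop atTop :=
    tendsto_id.atTop_mul_atTop₀ (tendsto_atTop_add_const_right _ _
      ((tendsto_const_mul_atTop_of_pos (half_pos hc)).2 tendsto_id))
  exact tendsto_atTop_mono h_lower (h_quad.comp tendsto_norm_cocompact_atTop)

theorem tendsto_logPotential_nhdsWithin {B : LinearMap.BilinForm ℝ V} (hB : ∀ x, 0 ≤ B x x)
    (β : ι → V →ₗ[ℝ] ℝ) {j : ι} {p : V} (hp : β j p = 0) :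
    Tendsto (logPotential B β) (𝓝[{x | β j x ≠ 0}] p) atTop := by
  have h_lower : ∀ x, -Real.log (β j x) + -∑ k, |β k x| ≤ logPotential B β x := fun x => by
    have := Finset.univ.sum_log_abs_le_log_abs_add_sum_abs (fun k => β k x) (Finset.mem_univ j)
    unfold logPotential
    rw [Real.log_abs] at this
    nlinarith [hB x]
  have hβ : Tendsto (β j) (𝓝[{x | β j x ≠ 0}] p) (𝓝[≠] 0) := by
    refine tendsto_nhdsWithin_iff.2 ⟨?_, eventually_nhdsWithin_of_forall fun x hx => hx⟩
    rw [← hp]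
    exact (β j).continuous_of_finiteDimensional.continuousAt.tendsto.mono_left nhdsWithin_le_nhds
  have h_sum : Continuous fun x => ∑ k, |β k x| :=
    continuous_finsetSum _ fun k _ => (β k).continuous_of_finiteDimensional.abs
  have h_log : Tendsto (fun x => -Real.log (β j x)) (𝓝[{x | β j x ≠ 0}] p) atTop :=
    tendsto_neg_atBot_atTop.comp (Real.tendsto_log_nhdsNE_zero.comp hβ)
  exact tendsto_atTop_mono h_lower
    (h_log.atTop_add ((h_sum.tendsto p).neg.mono_left nhdsWithin_le_nhds))

end LogPotential

theorem compact_sublevel_sets_log_potential_general {V : Type*} [NormedAddCommGroup V]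
    [NormedSpace ℝ V] [FiniteDimensional ℝ V]
    (B : LinearMap.BilinForm ℝ V)
    (hBpos : ∀ ζ : V, ζ ≠ 0 → 0 < B ζ ζ)
    (m : ℕ) (β : Fin m → (V →ₗ[ℝ] ℝ))
    (C : Set V) (x₀ : V)
    (hC : C = connectedComponentIn {ζ : V | ∀ j, β j ζ ≠ 0} x₀) :
    (∀ M : ℝ,
      IsCompact {ζ ∈ C | (1 / 2) * B ζ ζ - ∑ j, Real.log |β j ζ| ≤ M}) ∧
      ∀ ζs : ℕ → V, (∀ n, ζs n ∈ C) →
        (Tendsto (fun n => ‖ζs n‖) atTop atTop ∨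
          ∃ ζ' : V, (∃ j, β j ζ' = 0) ∧ Tendsto ζs atTop (nhds ζ')) →
        Tendsto (fun n => (1 / 2) * B (ζs n) (ζs n) - ∑ j, Real.log |β j (ζs n)|)
          atTop atTop := by
  set U := {ζ : V | ∀ j, β j ζ ≠ 0}
  have hCU : C ⊆ U := hC ▸ connectedComponentIn_subset U x₀
  have hB : ∀ ζ, 0 ≤ B ζ ζ := fun ζ =>
    (eq_or_ne ζ 0).elim (fun h => by simp [h]) fun h => (hBpos ζ h).le
  have h_wall : ∀ p ∉ U, Tendsto (logPotential B β) (𝓝[U] p) atTop := fun p hp => by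
    obtain ⟨j, hj⟩ : ∃ j, β j p = 0 := by simpa [U] using hp
    exact (tendsto_logPotential_nhdsWithin hB β hj).mono_left
      (nhdsWithin_mono _ fun x hx => hx j)
  have h_compact : ∀ M, IsCompact {ζ ∈ C | logPotential B β ζ ≤ M} := fun M => by
    have hK := isCompact_sublevel_of_tendsto_atTop (isOpen_setOf_forall_ne_zero β)
      (continuousOn_logPotential B β)
      ((tendsto_logPotential_cocompact hBpos β).mono_left inf_le_left) h_wall M
    convert hC ▸ hK.connectedComponentIn_inter (sep_subset _ _) x₀ using 1
    exact Set.ext fun ζ => ⟨fun h => ⟨h.1, hCU h.1, h.2⟩, fun h => ⟨h.1, h.2.2⟩⟩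
  refine ⟨h_compact, fun ζs hζs h_escape =>
    tendsto_comp_atTop_of_isCompact_sublevel h_compact (Eventually.of_forall hζs) ?_⟩
  intro K hKC hK
  rcases h_escape with h_norm | ⟨p, ⟨j, hj⟩, h_lim⟩
  · rw [tendsto_norm_atTop_iff_cobounded, Metric.cobounded_eq_cocompact] at h_norm
    exact h_norm hK.compl_mem_cocompact
  · exact h_lim (hK.isClosed.isOpen_compl.mem_nhds fun hp => hCU (hKC hp) j hj)

/-- Coercivity: on a connected component `C` of the complement of the hyperplanes
`β_j = 0`, the function `f(ζ) = ½·B(ζ,ζ) - Σ_j log |β_j(ζ)|` has compact sublevel sets;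
in particular `f(ζ_n) → ∞` along any sequence in `C` whose norms tend to `∞` or which
converges to a point where some `β_j` vanishes. -/
theorem compact_sublevel_sets_log_potential {V : Type*} [NormedAddCommGroup V]
    [NormedSpace ℝ V] [FiniteDimensional ℝ V]
    (B : LinearMap.BilinForm ℝ V) (hBsymm : ∀ x y, B x y = B y x)
    (hBpos : ∀ ζ : V, ζ ≠ 0 → 0 < B ζ ζ)
    (m : ℕ) (β : Fin m → (V →ₗ[ℝ] ℝ)) (hβ : ∀ j, β j ≠ 0)
    (C : Set V) (x₀ : V) (hx₀ : x₀ ∈ {ζ : V | ∀ j, β j ζ ≠ 0})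
    (hC : C = connectedComponentIn {ζ : V | ∀ j, β j ζ ≠ 0} x₀) :
    (∀ M : ℝ,
      IsCompact {ζ ∈ C | (1 / 2) * B ζ ζ - ∑ j, Real.log |β j ζ| ≤ M}) ∧
      ∀ ζs : ℕ → V, (∀ n, ζs n ∈ C) →
        (Tendsto (fun n => ‖ζs n‖) atTop atTop ∨
          ∃ ζ' : V, (∃ j, β j ζ' = 0) ∧ Tendsto ζs atTop (nhds ζ')) →
        Tendsto (fun n => (1 / 2) * B (ζs n) (ζs n) - ∑ j, Real.log |β j (ζs n)|)
          atTop atTop :=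
  compact_sublevel_sets_log_potential_general B hBpos m β C x₀ hC
end
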